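/- (Lemma on projections of H² functions.) Let ψ ∈ H²(0,1) ∩ H₀¹(0,1) and let Pψ = Σᵢ ξⁱ vⁱ be its L²-orthogonal projection onto the piecewise linear finite element space V on the uniform mesh with M subintervals. Then (Δx Σᵢ (D²ξ)ᵢ²)^{1/2} ≤ C ‖ψ''‖_{L²(0,1)} with C independent of Δx. -/

import Mathlib

open MeasureTheory intervalIntegral

/-- The nodal hat basis function at node `i Δx`, `Δx = 1/M`. -/
noncomputable def hatFn (M i : ℕ) (x : ℝ) : ℝ := max 0 (1 - |(M : ℝ) * x - (i : ℝ)|)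

/-- The piecewise linear function with nodal values `ξ i`. -/
noncomputable def plf (M : ℕ) (ξ : ℕ → ℝ) (x : ℝ) : ℝ :=
  ∑ i ∈ Finset.Icc 1 (M - 1), ξ i * hatFn M i x

/-- The second difference quotient `(D²ξ)ᵢ = (ξ_{i+1} - 2ξᵢ + ξ_{i-1})/Δx²`, `Δx = 1/M`. -/
noncomputable def d2q (M : ℕ) (ξ : ℕ → ℝ) (i : ℕ) : ℝ :=
  (M : ℝ) ^ 2 * (ξ (i + 1) - 2 * ξ i + ξ (i - 1))

/-!
Write `qⱼ = (ψ, vʲ)` for the interior nodes and `qⱼ = 0` at the boundary ones, and `B` for the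
stencil `tridiag(1, 4, 1) / 6`. The projection property says `q = Δx B ξ`, and `B` commutes with
`D²` up to boundary terms that cancel because `ξ₀ = ξ_M = 0`, so `B (D²ξ) = Δx⁻¹ D²q`.
Up to the boundary values `ψ(0) = ψ(1) = 0`, each `(D²q)ᵢ` tests `ψ` against
`Δx⁻² (v^{i-1} - 2vⁱ + v^{i+1})`, which kills affine functions, so comparing `ψ` with its Taylor polynomial at the node `i Δx` gives
`|(D²q)ᵢ| ≤ 8 ∫ |ψ''|` over the patch `[(i - 2) Δx, (i + 2) Δx]`. Cauchy–Schwarz on patches of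
length `4 Δx`, which overlap at most five at a time, bounds `Δx ∑ (B D²ξ)ᵢ²` by `1280 ‖ψ''‖²`,
and `‖B⁻¹‖ ≤ 3` finishes the proof.
-/

open Set

noncomputable def refHat (u : ℝ) : ℝ := max 0 (1 - |u|)

lemma hatFn_eq_refHat (M i : ℕ) (x : ℝ) : hatFn M i x = refHat (M * x - i) := rfl

@[fun_prop]
lemma continuous_refHat : Continuous refHat := by
  unfold refHat; fun_prop

lemma refHat_eq_zero {u : ℝ} (h : 1 ≤ |u|) : refHat u = 0 :=
  max_eq_left (by linarith)

lemma abs_lt_one_of_refHat_ne_zero {u : ℝ} (h : refHat u ≠ 0) : |u| < 1 :=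
  lt_of_not_ge fun h' => h (refHat_eq_zero h')

lemma support_refHat_subset : Function.support refHat ⊆ Ioo (-1) 1 := fun _ hu =>
  abs_lt.mp (abs_lt_one_of_refHat_ne_zero hu)

lemma refHat_of_nonpos {u : ℝ} (h₁ : -1 ≤ u) (h₂ : u ≤ 0) : refHat u = 1 + u := by
  rw [refHat, abs_of_nonpos h₂, max_eq_right (by linarith)]; ring

lemma refHat_of_nonneg {u : ℝ} (h₁ : 0 ≤ u) (h₂ : u ≤ 1) : refHat u = 1 - u := by
  rw [refHat, abs_of_nonneg h₁, max_eq_right (by linarith)]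

lemma integral_quadratic (p q r a b : ℝ) :
    ∫ u in a..b, (p + q * u + r * u ^ 2) =
      (p * b + q * b ^ 2 / 2 + r * b ^ 3 / 3) - (p * a + q * a ^ 2 / 2 + r * a ^ 3 / 3) := by
  refine integral_eq_sub_of_hasDerivAt (f := fun v => p * v + q * v ^ 2 / 2 + r * v ^ 3 / 3)
    (fun u _ => ?_)
    ((by fun_prop : Continuous fun u : ℝ => p + q * u + r * u ^ 2).intervalIntegrable a b)
  convert (((hasDerivAt_id u).const_mul p).add (((hasDerivAt_pow 2 u).const_mul q).div_const 2)).add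
    (((hasDerivAt_pow 3 u).const_mul r).div_const 3) using 1
  · ext v; simp
  · simp only [mul_one, Nat.cast_ofNat, Nat.add_one_sub_one, pow_one]; ring

lemma integral_piecewise_quadratic {F : ℝ → ℝ} (hF : Continuous F) {p₁ q₁ r₁ p₂ q₂ r₂ : ℝ}
    (h₁ : ∀ u ∈ Icc (-1 : ℝ) 0, F u = p₁ + q₁ * u + r₁ * u ^ 2)
    (h₂ : ∀ u ∈ Icc (0 : ℝ) 1, F u = p₂ + q₂ * u + r₂ * u ^ 2) :
    ∫ u in (-1 : ℝ)..1, F u = (p₁ - q₁ / 2 + r₁ / 3) + (p₂ + q₂ / 2 + r₂ / 3) := by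
  rw [← integral_add_adjacent_intervals (hF.intervalIntegrable (-1) 0) (hF.intervalIntegrable 0 1),
    integral_congr (fun u hu => h₁ u (by rwa [uIcc_of_le (by norm_num)] at hu)),
    integral_congr (fun u hu => h₂ u (by rwa [uIcc_of_le (by norm_num)] at hu)),
    integral_quadratic, integral_quadratic]
  ring

lemma integral_refHat_sq : ∫ u in (-1 : ℝ)..1, refHat u * refHat u = 2 / 3 := by
  rw [integral_piecewise_quadratic (p₁ := 1) (q₁ := 2) (r₁ := 1) (p₂ := 1) (q₂ := -2) (r₂ := 1)
    (by fun_prop)]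
  · norm_num
  · intro u hu; rw [refHat_of_nonpos hu.1 hu.2]; ring
  · intro u hu; rw [refHat_of_nonneg hu.1 hu.2]; ring

lemma integral_affine_mul_refHat (a b : ℝ) : ∫ u in (-1 : ℝ)..1, (a + b * u) * refHat u = a := by
  rw [integral_piecewise_quadratic (p₁ := a) (q₁ := a + b) (r₁ := b) (p₂ := a) (q₂ := b - a)
    (r₂ := -b) (by fun_prop)]
  · ring
  · intro u hu; rw [refHat_of_nonpos hu.1 hu.2]; ring
  · intro u hu; rw [refHat_of_nonneg hu.1 hu.2]; ring

lemma integral_refHat_mul_refHat_add_one :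
    ∫ u in (-1 : ℝ)..1, refHat (u + 1) * refHat u = 1 / 6 := by
  rw [integral_piecewise_quadratic (p₁ := 0) (q₁ := -1) (r₁ := -1) (p₂ := 0) (q₂ := 0) (r₂ := 0)
    (by fun_prop)]
  · norm_num
  · intro u hu
    rw [refHat_of_nonpos hu.1 hu.2, refHat_of_nonneg (by linarith [hu.1]) (by linarith [hu.2])]
    ring
  · intro u hu
    rw [refHat_eq_zero (u := u + 1) (by rw [abs_of_nonneg (by linarith [hu.1])]; linarith [hu.1])]
    ring

lemma integral_refHat_mul_refHat_sub_one :
    ∫ u in (-1 : ℝ)..1, refHat (u - 1) * refHat u = 1 / 6 := by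
  rw [integral_piecewise_quadratic (p₁ := 0) (q₁ := 0) (r₁ := 0) (p₂ := 0) (q₂ := 1) (r₂ := -1)
    (by fun_prop)]
  · norm_num
  · intro u hu
    rw [refHat_eq_zero (u := u - 1) (by rw [abs_of_nonpos (by linarith [hu.2])]; linarith [hu.2])]
    ring
  · intro u hu
    rw [refHat_of_nonneg hu.1 hu.2, refHat_of_nonpos (by linarith [hu.1]) (by linarith [hu.2])]
    ring

@[fun_prop]
lemma continuous_hatFn (M i : ℕ) : Continuous (hatFn M i) := by
  unfold hatFn; fun_prop

lemma hatFn_nonneg (M i : ℕ) (x : ℝ) : 0 ≤ hatFn M i x := le_max_left _ _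

lemma abs_sub_lt_one_of_hatFn_ne_zero {M i : ℕ} {x : ℝ} (h : hatFn M i x ≠ 0) :
    |(M : ℝ) * x - i| < 1 :=
  abs_lt_one_of_refHat_ne_zero h

lemma cast_pos_of_mem_interior {M j : ℕ} (hj : j ∈ Finset.Icc 1 (M - 1)) : (0 : ℝ) < M := by
  obtain ⟨h₁, h₂⟩ := Finset.mem_Icc.mp hj
  exact_mod_cast (by omega : 0 < M)

lemma integral_comp_mul_sub_node {M j : ℕ} (hj : j ∈ Finset.Icc 1 (M - 1)) {f : ℝ → ℝ}
    (hf : Function.support f ⊆ Ioo (-1) 1) :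
    ∫ x in (0 : ℝ)..1, f (M * x - j) = (∫ u in (-1 : ℝ)..1, f u) / M := by
  obtain ⟨hj₁, hj₂⟩ := Finset.mem_Icc.mp hj
  have hj₁' : (1 : ℝ) ≤ j := by exact_mod_cast hj₁
  have hj₂' : (j : ℝ) + 1 ≤ M := by exact_mod_cast (by omega : j + 1 ≤ M)
  rw [integral_comp_mul_sub f (cast_pos_of_mem_interior hj).ne', smul_eq_mul, inv_mul_eq_div,
    mul_zero, mul_one,
    integral_eq_integral_of_support_subset (hf.trans (Ioo_subset_Ioc_self.trans
      (Ioc_subset_Ioc (by linarith) (by linarith)))),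
    integral_eq_integral_of_support_subset (hf.trans Ioo_subset_Ioc_self)]

lemma integral_hatFn_mul_hatFn_node {M j : ℕ} (hj : j ∈ Finset.Icc 1 (M - 1)) (k : ℕ) :
    ∫ x in (0 : ℝ)..1, hatFn M k x * hatFn M j x =
      (∫ u in (-1 : ℝ)..1, refHat (u + j - k) * refHat u) / M := by
  rw [← integral_comp_mul_sub_node hj
    ((Function.support_mul_subset_right _ _).trans support_refHat_subset)]
  simp only [hatFn_eq_refHat, sub_add_cancel]

lemma hatFn_mul_hatFn_eq_zero {M j k : ℕ} (h : j + 2 ≤ k) (x : ℝ) :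
    hatFn M j x * hatFn M k x = 0 := by
  by_contra hne
  have hj := abs_lt.mp (abs_sub_lt_one_of_hatFn_ne_zero (left_ne_zero_of_mul hne))
  have hk := abs_lt.mp (abs_sub_lt_one_of_hatFn_ne_zero (right_ne_zero_of_mul hne))
  have : (j : ℝ) + 2 ≤ k := by exact_mod_cast h
  linarith [hj.2, hk.1]

lemma integral_affine_mul_hatFn {M j : ℕ} (hj : j ∈ Finset.Icc 1 (M - 1)) (a b : ℝ) :
    ∫ x in (0 : ℝ)..1, (a + b * x) * hatFn M j x = (a + b * (j / M)) / M := by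
  have hM := (cast_pos_of_mem_interior hj).ne'
  have hcov := integral_comp_mul_sub_node hj
    (f := fun u => (a + b * (j / M) + b / M * u) * refHat u)
    ((Function.support_mul_subset_right _ _).trans support_refHat_subset)
  rw [integral_affine_mul_refHat] at hcov
  rw [← hcov]
  congr 1; ext x
  rw [hatFn_eq_refHat]
  field_simp
  ring

lemma integral_hatFn {M j : ℕ} (hj : j ∈ Finset.Icc 1 (M - 1)) :
    ∫ x in (0 : ℝ)..1, hatFn M j x = 1 / M := by
  simpa using integral_affine_mul_hatFn hj 1 0

lemma integral_hatFn_mul_hatFn_eq_zero {M j k : ℕ} (h : k ∉ Finset.Icc (j - 1) (j + 1)) :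
    ∫ x in (0 : ℝ)..1, hatFn M k x * hatFn M j x = 0 := by
  rw [Finset.mem_Icc, not_and_or, not_le, not_le] at h
  rcases h with h | h
  · simp [hatFn_mul_hatFn_eq_zero (by omega : k + 2 ≤ j)]
  · simp [mul_comm (hatFn M k _), hatFn_mul_hatFn_eq_zero (by omega : j + 2 ≤ k)]

/-- The paper's matrix `B = tridiag(1, 4, 1) / 6`; the mass matrix `((vᵏ, vʲ))` is `Δx B`. -/
noncomputable def massAvg (f : ℕ → ℝ) (j : ℕ) : ℝ := (f (j - 1) + 4 * f j + f (j + 1)) / 6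

lemma integral_plf_mul_hatFn {M j : ℕ} {ξ : ℕ → ℝ}
    (hξ : ∀ k ∉ Finset.Icc 1 (M - 1), ξ k = 0) (hj : j ∈ Finset.Icc 1 (M - 1)) :
    ∫ x in (0 : ℝ)..1, plf M ξ x * hatFn M j x = massAvg ξ j / M := by
  have hj₁ := (Finset.mem_Icc.mp hj).1
  have hM := (cast_pos_of_mem_interior hj).ne'
  have hnodes : Finset.Icc (j - 1) (j + 1) = {j - 1, j, j + 1} := by
    ext k; simp only [Finset.mem_Icc, Finset.mem_insert, Finset.mem_singleton]; omega
  have hcast : ((j - 1 : ℕ) : ℝ) = j - 1 := by rw [Nat.cast_sub hj₁, Nat.cast_one]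
  have hexpand : ∫ x in (0 : ℝ)..1, plf M ξ x * hatFn M j x =
      ∑ k ∈ Finset.Icc 1 (M - 1), ξ k * ∫ x in (0 : ℝ)..1, hatFn M k x * hatFn M j x := by
    simp only [plf, Finset.sum_mul, mul_assoc]
    rw [integral_finsetSum fun k _ => (by fun_prop : Continuous _).intervalIntegrable 0 1]
    exact Finset.sum_congr rfl fun k _ => intervalIntegral.integral_const_mul _ _
  have hneighbours : ∑ k ∈ Finset.Icc 1 (M - 1), ξ k * ∫ x in (0 : ℝ)..1, hatFn M k x * hatFn M j x
      = ∑ k ∈ Finset.Icc (j - 1) (j + 1), ξ k * ∫ x in (0 : ℝ)..1, hatFn M k x * hatFn M j x :=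
    Finset.sum_congr_of_eq_on_inter
      (fun k _ hk => by rw [integral_hatFn_mul_hatFn_eq_zero hk, mul_zero])
      (fun k _ hk => by rw [hξ k hk, zero_mul]) fun _ _ _ => rfl
  rw [hexpand, hneighbours, hnodes,
    Finset.sum_insert (by simp only [Finset.mem_insert, Finset.mem_singleton]; omega),
    Finset.sum_pair (by omega),
    integral_hatFn_mul_hatFn_node hj, integral_hatFn_mul_hatFn_node hj,
    integral_hatFn_mul_hatFn_node hj, hcast]
  have e₁ (u : ℝ) : u + j - (j - 1) = u + 1 := by ring
  have e₂ (u : ℝ) : u + j - j = u := by ring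
  have e₃ (u : ℝ) : u + j - (j + 1 : ℕ) = u - 1 := by push_cast; ring
  simp only [e₁, e₂, e₃]
  rw [integral_refHat_mul_refHat_add_one, integral_refHat_sq, integral_refHat_mul_refHat_sub_one,
    massAvg]
  field_simp
  ring

noncomputable def interiorPart (M : ℕ) (f : ℕ → ℝ) (j : ℕ) : ℝ :=
  if j ∈ Finset.Icc 1 (M - 1) then f j else 0

noncomputable def load (M : ℕ) (ψ : ℝ → ℝ) : ℕ → ℝ :=
  interiorPart M fun k => ∫ x in (0 : ℝ)..1, ψ x * hatFn M k x

lemma load_eq_interiorPart_massAvg {M : ℕ} {ξ : ℕ → ℝ} {ψ : ℝ → ℝ}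
    (hξ : ∀ k ∉ Finset.Icc 1 (M - 1), ξ k = 0)
    (hproj : ∀ i ∈ Finset.Icc 1 (M - 1),
      ∫ x in (0 : ℝ)..1, ψ x * hatFn M i x = ∫ x in (0 : ℝ)..1, plf M ξ x * hatFn M i x) :
    load M ψ = interiorPart M fun j => massAvg ξ j / M := funext fun j => by
  unfold load interiorPart
  split_ifs with hj
  exacts [(hproj j hj).trans (integral_plf_mul_hatFn hξ hj), rfl]

def secondDiff (f : ℕ → ℝ) (j : ℕ) : ℝ := f (j + 1) - 2 * f j + f (j - 1)

/-- At a boundary node `k`, where `ξ k = 0`, `(D²ξ)ₖ = 6 M² (massAvg ξ)ₖ`, so the two truncations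
to the interior nodes discard the same amount. -/
lemma massAvg_interiorPart_d2q {M i : ℕ} {ξ : ℕ → ℝ}
    (hξ : ∀ k ∉ Finset.Icc 1 (M - 1), ξ k = 0) (hi : i ∈ Finset.Icc 1 (M - 1)) :
    massAvg (interiorPart M (d2q M ξ)) i =
      M ^ 3 * secondDiff (interiorPart M fun j => massAvg ξ j / M) i := by
  obtain ⟨hi₁, hi₂⟩ := Finset.mem_Icc.mp hi
  have hM := (cast_pos_of_mem_interior hi).ne'
  have hl : i - 1 + 1 = i := by omega
  have hr : i + 1 - 1 = i := by omega
  simp only [massAvg, secondDiff, interiorPart, d2q, if_pos hi, hl, hr]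
  split_ifs with h₁ h₂ h₂
  · field_simp; ring
  · rw [hξ _ h₂]; field_simp; ring
  · rw [hξ _ h₁]; field_simp; ring
  · rw [hξ _ h₁, hξ _ h₂]; field_simp; ring

lemma sum_sq_comp_le {ι κ : Type*} [DecidableEq κ] {s : Finset ι} {t : Finset κ} {e : κ → ℝ}
    (he : ∀ k ∉ t, e k = 0) {φ : ι → κ} (hφ : Set.InjOn φ s) :
    ∑ i ∈ s, e (φ i) ^ 2 ≤ ∑ k ∈ t, e k ^ 2 := by
  rw [← Finset.sum_image (f := fun k => e k ^ 2) hφ, ← Finset.sum_filter_of_ne (p := (· ∈ t))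
    fun k _ hk => by_contra fun hkt => hk (by simp [he k hkt])]
  exact Finset.sum_le_sum_of_subset_of_nonneg (fun k hk => (Finset.mem_filter.mp hk).2)
    fun k _ _ => sq_nonneg _

/-- `‖B⁻¹‖ ≤ 3`, from the coercivity `(Be, e) ≥ ‖e‖² / 3`. -/
lemma sum_sq_le_nine_mul_sum_sq_massAvg {N : ℕ} {e : ℕ → ℝ}
    (he : ∀ k ∉ Finset.Icc 1 N, e k = 0) :
    ∑ i ∈ Finset.Icc 1 N, e i ^ 2 ≤ 9 * ∑ i ∈ Finset.Icc 1 N, massAvg e i ^ 2 := by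
  have hpred := sum_sq_comp_le he (s := Finset.Icc 1 N) (φ := (· - 1)) fun i hi k hk h => by
    simp only [Finset.coe_Icc, mem_Icc] at hi hk h; omega
  have hsucc := sum_sq_comp_le he (s := Finset.Icc 1 N) (φ := (· + 1)) fun i _ k _ h => by
    simp only at h; omega
  have hpt : ∀ i ∈ Finset.Icc 1 N,
      e i ^ 2 / 3 - e (i - 1) ^ 2 / 12 - e (i + 1) ^ 2 / 12 ≤ 3 / 2 * massAvg e i ^ 2 :=
    fun i _ => by
      unfold massAvg
      nlinarith [sq_nonneg (e i + e (i - 1)), sq_nonneg (e i + e (i + 1)),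
        sq_nonneg (e i - 3 * massAvg e i)]
  have hsum := Finset.sum_le_sum hpt
  simp only [Finset.sum_sub_distrib, ← Finset.sum_div, ← Finset.mul_sum] at hsum
  linarith

lemma abs_sub_le_setIntegral_abs {g g' : ℝ → ℝ} {A : Set ℝ} (hA : A.OrdConnected)
    (hg' : IntegrableOn g' A) (hftc : ∀ a ∈ A, ∀ b ∈ A, g b - g a = ∫ x in a..b, g' x)
    {a b : ℝ} (ha : a ∈ A) (hb : b ∈ A) :
    |g b - g a| ≤ ∫ x in A, |g' x| := by
  rw [hftc a ha b hb, ← Real.norm_eq_abs]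
  refine norm_integral_le_integral_norm_uIoc.trans (setIntegral_mono_set hg'.norm
    (ae_of_all _ fun _ => norm_nonneg _) ?_)
  exact (uIoc_subset_uIcc.trans (hA.uIcc_subset ha hb)).eventuallyLE

lemma abs_sub_sub_mul_le {f f' f'' : ℝ → ℝ} {A : Set ℝ} (hA : A.OrdConnected)
    (hf'c : ContinuousOn f' A) (hf'' : IntegrableOn f'' A)
    (hf : ∀ a ∈ A, ∀ b ∈ A, f b - f a = ∫ x in a..b, f' x)
    (hf' : ∀ a ∈ A, ∀ b ∈ A, f' b - f' a = ∫ x in a..b, f'' x)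
    {c x : ℝ} (hc : c ∈ A) (hx : x ∈ A) :
    |f x - f c - f' c * (x - c)| ≤ |x - c| * ∫ t in A, |f'' t| := by
  have hsub := hA.uIcc_subset hc hx
  have hrem : f x - f c - f' c * (x - c) = ∫ t in c..x, (f' t - f' c) := by
    rw [integral_sub ((hf'c.mono hsub).intervalIntegrable) intervalIntegrable_const,
      intervalIntegral.integral_const, smul_eq_mul, hf c hc x hx]
    ring
  rw [hrem, ← Real.norm_eq_abs, mul_comm]
  exact norm_integral_le_of_norm_le_const fun t ht =>
    abs_sub_le_setIntegral_abs hA hf'' hf' hc (hsub (uIoc_subset_uIcc ht))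

lemma sq_integral_abs_le {α : Type*} [MeasurableSpace α] {μ : Measure α} [IsFiniteMeasure μ]
    {f : α → ℝ} (hf : Integrable f μ) (hf2 : Integrable (fun x => f x ^ 2) μ) :
    (∫ x, |f x| ∂μ) ^ 2 ≤ μ.real univ * ∫ x, f x ^ 2 ∂μ := by
  have hquad : ∀ t : ℝ,
      0 ≤ μ.real univ * (t * t) + (-2 * ∫ x, |f x| ∂μ) * t + ∫ x, f x ^ 2 ∂μ := fun t => by
    have hexp : (fun x => (t - |f x|) ^ 2) = fun x => t ^ 2 - 2 * t * |f x| + f x ^ 2 := by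
      ext x; rw [← sq_abs (f x)]; ring
    have h : 0 ≤ ∫ x, (t - |f x|) ^ 2 ∂μ := integral_nonneg fun x => sq_nonneg _
    have hlin : Integrable (fun x => t ^ 2 - 2 * t * |f x|) μ :=
      (integrable_const _).sub (hf.abs.const_mul _)
    rw [hexp, integral_add hlin hf2,
      integral_sub (integrable_const _) (hf.abs.const_mul _), MeasureTheory.integral_const,
      MeasureTheory.integral_const_mul, smul_eq_mul] at h
    linarith
  have := discrim_le_zero hquad
  rw [discrim] at this
  linarith

/-- The union of the supports of `v^{i-1}, vⁱ, v^{i+1}` inside `[0, 1]`. -/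
def patch (M i : ℕ) : Set ℝ := Icc 0 1 ∩ Icc ((i - 2) / M) ((i + 2) / M)

lemma patch_subset (M i : ℕ) : patch M i ⊆ Icc 0 1 := inter_subset_left

lemma ordConnected_patch (M i : ℕ) : (patch M i).OrdConnected :=
  ordConnected_Icc.inter ordConnected_Icc

lemma measurableSet_patch (M i : ℕ) : MeasurableSet (patch M i) :=
  measurableSet_Icc.inter measurableSet_Icc

lemma volume_real_patch_le {M : ℕ} (i : ℕ) (hM : 0 < M) : volume.real (patch M i) ≤ 4 / M := by
  refine (measureReal_mono inter_subset_right measure_Icc_lt_top.ne).trans ?_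
  rw [Real.volume_real_Icc, ← sub_div]
  exact max_le (by ring_nf; rfl) (by positivity)

open Classical in
lemma card_filter_mem_patch_le {M : ℕ} (hM : 0 < M) (s : Finset ℕ) {x : ℝ} (hx : 0 ≤ x) :
    (s.filter fun i => x ∈ patch M i).card ≤ 5 := by
  have hM' : (0 : ℝ) < M := by exact_mod_cast hM
  set n := ⌊(M : ℝ) * x⌋₊
  have hsub : s.filter (fun i => x ∈ patch M i) ⊆ Finset.Icc (n - 2) (n + 2) := fun i hi => by
    obtain ⟨-, -, hlo, hhi⟩ := Finset.mem_filter.mp hi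
    rw [div_le_iff₀ hM'] at hlo
    rw [le_div_iff₀ hM'] at hhi
    have h₁ : (i : ℝ) < n + 3 := by linarith [Nat.lt_floor_add_one ((M : ℝ) * x)]
    have h₂ : (n : ℝ) ≤ i + 2 := by linarith [Nat.floor_le (by positivity : 0 ≤ (M : ℝ) * x)]
    have h₁' : i < n + 3 := by exact_mod_cast h₁
    have h₂' : n ≤ i + 2 := by exact_mod_cast h₂
    exact Finset.mem_Icc.mpr ⟨by omega, by omega⟩
  exact (Finset.card_le_card hsub).trans (by rw [Nat.card_Icc]; omega)

lemma sum_setIntegral_patch_le {M : ℕ} (hM : 0 < M) (s : Finset ℕ) {f : ℝ → ℝ}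
    (hf : IntegrableOn f (Icc 0 1)) (hf0 : ∀ x, 0 ≤ f x) :
    ∑ i ∈ s, ∫ x in patch M i, f x ≤ 5 * ∫ x in Icc 0 1, f x := by
  have hind : ∀ i, ∫ x in patch M i, f x = ∫ x in Icc 0 1, (patch M i).indicator f x := fun i =>
    by rw [setIntegral_indicator (measurableSet_patch M i), inter_eq_right.mpr (patch_subset M i)]
  simp only [hind]
  rw [← integral_finsetSum _ fun i _ => hf.indicator (measurableSet_patch M i),
    ← MeasureTheory.integral_const_mul]
  refine setIntegral_mono_on (integrable_finsetSum _ fun i _ =>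
    hf.indicator (measurableSet_patch M i)) (hf.const_mul 5) measurableSet_Icc fun x hx => ?_
  classical
  simp only [indicator_apply, ← Finset.sum_filter, Finset.sum_const, nsmul_eq_mul]
  exact mul_le_mul_of_nonneg_right (by exact_mod_cast card_filter_mem_patch_le hM s hx.1) (hf0 x)

lemma abs_integral_mul_hatFn_le {M j : ℕ} (hj : j ∈ Finset.Icc 1 (M - 1)) {g : ℝ → ℝ}
    (hg : ContinuousOn g (Icc 0 1)) {E : ℝ}
    (hE : ∀ x ∈ Icc (0 : ℝ) 1, hatFn M j x ≠ 0 → |g x| ≤ E) :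
    |∫ x in (0 : ℝ)..1, g x * hatFn M j x| ≤ E / M := by
  have hint : IntervalIntegrable (fun x => g x * hatFn M j x) volume 0 1 :=
    (hg.mul (continuous_hatFn M j).continuousOn).intervalIntegrable_of_Icc zero_le_one
  calc |∫ x in (0 : ℝ)..1, g x * hatFn M j x|
      ≤ ∫ x in (0 : ℝ)..1, |g x * hatFn M j x| := abs_integral_le_integral_abs zero_le_one
    _ ≤ ∫ x in (0 : ℝ)..1, E * hatFn M j x := by
        refine integral_mono_on zero_le_one hint.abs
          ((by fun_prop : Continuous _).intervalIntegrable 0 1) fun x hx => ?_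
        rw [abs_mul, abs_of_nonneg (hatFn_nonneg M j x)]
        by_cases h : hatFn M j x = 0
        · simp [h]
        · exact mul_le_mul_of_nonneg_right (hE x hx h) (hatFn_nonneg M j x)
    _ = E / M := by rw [intervalIntegral.integral_const_mul, integral_hatFn hj]; ring

/-- At the boundary nodes `j = 0, M`, where the load is `0`, the bound comes from `ψ(j / M) = 0`. -/
lemma abs_load_sub_le {M j : ℕ} (hM : 0 < M) (hjM : j ≤ M) {ψ : ℝ → ℝ}
    (hψ0 : ψ 0 = 0) (hψ1 : ψ 1 = 0) (hψ : ContinuousOn ψ (Icc 0 1)) {a b E : ℝ}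
    (hE : ∀ x ∈ Icc (0 : ℝ) 1, |M * x - j| ≤ 1 → |ψ x - (a + b * x)| ≤ E) :
    |load M ψ j - (a + b * (j / M)) / M| ≤ E / M := by
  have hM' : (0 : ℝ) < M := by exact_mod_cast hM
  by_cases hj : j ∈ Finset.Icc 1 (M - 1)
  · rw [load, interiorPart, if_pos hj, ← integral_affine_mul_hatFn hj,
      ← intervalIntegral.integral_sub (ContinuousOn.intervalIntegrable_of_Icc (u := fun x => ψ x * hatFn M j x) zero_le_one
        (hψ.mul (continuous_hatFn M j).continuousOn))
      ((by fun_prop : Continuous fun x : ℝ => (a + b * x) * hatFn M j x).intervalIntegrable 0 1)]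
    simp only [← sub_mul]
    refine abs_integral_mul_hatFn_le hj (hψ.sub (by fun_prop)) fun x hx hx0 =>
      hE x hx (abs_sub_lt_one_of_hatFn_ne_zero hx0).le
  · have hnode : (j : ℝ) / M = 0 ∨ (j : ℝ) / M = 1 := by
      rcases (by simp only [Finset.mem_Icc] at hj; omega : j = 0 ∨ j = M) with rfl | rfl
      · simp
      · simp [hM'.ne']
    have hmem : (j : ℝ) / M ∈ Icc (0 : ℝ) 1 := by rcases hnode with h | h <;> simp [h]
    have hψj : ψ (j / M) = 0 := by rcases hnode with h | h <;> simp [h, hψ0, hψ1]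
    have h := hE _ hmem (by rw [mul_div_cancel₀ _ hM'.ne', sub_self, abs_zero]; exact zero_le_one)
    rw [hψj, zero_sub, abs_neg] at h
    rw [load, interiorPart, if_neg hj, zero_sub, abs_neg, abs_div, abs_of_pos hM']
    exact div_le_div_of_nonneg_right h hM'.le

/-- Second differences annihilate the affine part `a + b x`. -/
lemma abs_secondDiff_load_le {M i : ℕ} (hi : i ∈ Finset.Icc 1 (M - 1)) {ψ : ℝ → ℝ}
    (hψ0 : ψ 0 = 0) (hψ1 : ψ 1 = 0) (hψ : ContinuousOn ψ (Icc 0 1)) {a b E : ℝ}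
    (hE : ∀ x ∈ patch M i, |ψ x - (a + b * x)| ≤ E) :
    |secondDiff (load M ψ) i| ≤ 4 * E / M := by
  obtain ⟨hi₁, hi₂⟩ := Finset.mem_Icc.mp hi
  have hM' := cast_pos_of_mem_interior hi
  have hM : 0 < M := by exact_mod_cast hM'
  have hnear : ∀ j : ℕ, (i : ℝ) - 1 ≤ j → (j : ℝ) ≤ i + 1 → j ≤ M →
      |load M ψ j - (a + b * (j / M)) / M|
        ≤ E / M := fun j hj₁ hj₂ hjM =>
    abs_load_sub_le hM hjM hψ0 hψ1 hψ fun x hx hxj => by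
      obtain ⟨hlo, hhi⟩ := abs_le.mp hxj
      refine hE x ⟨hx, ?_, ?_⟩
      · rw [div_le_iff₀ hM']; linarith
      · rw [le_div_iff₀ hM']; linarith
  have hcast : ((i - 1 : ℕ) : ℝ) = i - 1 := by rw [Nat.cast_sub hi₁, Nat.cast_one]
  have hi' : (i : ℝ) + 1 ≤ M := by exact_mod_cast (by omega : i + 1 ≤ M)
  have hl := hnear (i - 1) (by rw [hcast]) (by rw [hcast]; linarith) (by omega)
  have hc := hnear i (by linarith) (by linarith) (by omega)
  have hr := hnear (i + 1) (by push_cast; linarith) (by push_cast; linarith) (by omega)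
  rw [hcast] at hl
  push_cast at hr
  have haff : (a + b * ((i + 1) / M)) / M - 2 * ((a + b * (i / M)) / M)
      + (a + b * ((i - 1) / M)) / M = 0 := by field_simp; ring
  rw [abs_le] at hl hc hr ⊢
  rw [secondDiff, mul_div_assoc]
  constructor <;> linarith [hl.1, hl.2, hc.1, hc.2, hr.1, hr.2]

instance isFiniteMeasure_restrict_patch (M i : ℕ) : IsFiniteMeasure (volume.restrict (patch M i)) :=
  isFiniteMeasure_restrict.2 ((measure_mono (patch_subset M i)).trans_lt measure_Icc_lt_top).ne

structure IsH2Dirichlet (ψ ψ' ψ'' : ℝ → ℝ) : Prop where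
  map_zero : ψ 0 = 0
  map_one : ψ 1 = 0
  continuousOn : ContinuousOn ψ (Icc 0 1)
  continuousOn_deriv : ContinuousOn ψ' (Icc 0 1)
  integrableOn_deriv2 : IntegrableOn ψ'' (Icc 0 1)
  integrableOn_deriv2_sq : IntegrableOn (fun x => ψ'' x ^ 2) (Icc 0 1)
  sub_eq_integral : ∀ a ∈ Icc (0 : ℝ) 1, ∀ b ∈ Icc (0 : ℝ) 1, ψ b - ψ a = ∫ x in a..b, ψ' x
  deriv_sub_eq_integral :
    ∀ a ∈ Icc (0 : ℝ) 1, ∀ b ∈ Icc (0 : ℝ) 1, ψ' b - ψ' a = ∫ x in a..b, ψ'' x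

section LocalEstimate

variable {M i : ℕ} {ψ ψ' ψ'' : ℝ → ℝ}

/-- The first-order Taylor polynomial of `ψ` at the node `i / M` is `(2 / M) ∫ |ψ''|`-close to `ψ`
on the patch. -/
lemma abs_secondDiff_load_le_setIntegral (hi : i ∈ Finset.Icc 1 (M - 1))
    (hψ : IsH2Dirichlet ψ ψ' ψ'') :
    |secondDiff (load M ψ) i| ≤ 8 / M ^ 2 * ∫ x in patch M i, |ψ'' x| := by
  obtain ⟨hi₁, hi₂⟩ := Finset.mem_Icc.mp hi
  have hM := cast_pos_of_mem_interior hi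
  have hiM : (i : ℝ) ≤ M := by exact_mod_cast (by omega : i ≤ M)
  set c : ℝ := i / M
  have hc : c ∈ patch M i := ⟨⟨by positivity, (div_le_one hM).mpr hiM⟩,
    div_le_div_of_nonneg_right (by linarith) hM.le, div_le_div_of_nonneg_right (by linarith) hM.le⟩
  have hsub := patch_subset M i
  have htaylor : ∀ x ∈ patch M i, |ψ x - ((ψ c - ψ' c * c) + ψ' c * x)|
      ≤ 2 / M * ∫ t in patch M i, |ψ'' t| := fun x hx => by
    have hxc : |x - c| ≤ 2 / M := by
      obtain ⟨-, hlo, hhi⟩ := hx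
      rw [abs_le]
      constructor
      · calc -(2 / M) = (i - 2) / M - c := by ring
          _ ≤ x - c := by linarith
      · calc x - c ≤ (i + 2) / M - c := by linarith
          _ = 2 / M := by ring
    calc |ψ x - ((ψ c - ψ' c * c) + ψ' c * x)| = |ψ x - ψ c - ψ' c * (x - c)| := by ring_nf
      _ ≤ |x - c| * ∫ t in patch M i, |ψ'' t| :=
        abs_sub_sub_mul_le (ordConnected_patch M i) (hψ.continuousOn_deriv.mono hsub)
          (hψ.integrableOn_deriv2.mono_set hsub)
          (fun a ha b hb => hψ.sub_eq_integral a (hsub ha) b (hsub hb))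
          (fun a ha b hb => hψ.deriv_sub_eq_integral a (hsub ha) b (hsub hb)) hc hx
      _ ≤ 2 / M * ∫ t in patch M i, |ψ'' t| :=
        mul_le_mul_of_nonneg_right hxc (integral_nonneg fun _ => abs_nonneg _)
  calc _ ≤ 4 * (2 / M * ∫ t in patch M i, |ψ'' t|) / M :=
        abs_secondDiff_load_le hi hψ.map_zero hψ.map_one hψ.continuousOn htaylor
    _ = 8 / M ^ 2 * ∫ x in patch M i, |ψ'' x| := by field_simp; ring

lemma sq_secondDiff_load_le (hi : i ∈ Finset.Icc 1 (M - 1)) (hψ : IsH2Dirichlet ψ ψ' ψ'') :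
    (M ^ 3 * secondDiff (load M ψ) i) ^ 2 ≤ 256 * M * ∫ x in patch M i, ψ'' x ^ 2 := by
  have hM := cast_pos_of_mem_interior hi
  have hsub := patch_subset M i
  set L := ∫ x in patch M i, |ψ'' x|
  have hL : L ^ 2 ≤ 4 / M * ∫ x in patch M i, ψ'' x ^ 2 := by
    refine (sq_integral_abs_le (hψ.integrableOn_deriv2.mono_set hsub)
      (hψ.integrableOn_deriv2_sq.mono_set hsub)).trans ?_
    rw [measureReal_restrict_apply_univ]
    exact mul_le_mul_of_nonneg_right (volume_real_patch_le i (by exact_mod_cast hM))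
      (integral_nonneg fun _ => sq_nonneg _)
  have hsd := abs_secondDiff_load_le_setIntegral hi hψ
  calc (M ^ 3 * secondDiff _ i) ^ 2 = (M : ℝ) ^ 6 * |secondDiff _ i| ^ 2 := by
        rw [sq_abs]; ring
    _ ≤ (M : ℝ) ^ 6 * (8 / M ^ 2 * L) ^ 2 := by gcongr
    _ = 64 * M ^ 2 * L ^ 2 := by field_simp; ring
    _ ≤ 64 * M ^ 2 * (4 / M * ∫ x in patch M i, ψ'' x ^ 2) := by gcongr
    _ = 256 * M * ∫ x in patch M i, ψ'' x ^ 2 := by field_simp; ring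

end LocalEstimate

lemma sum_sq_d2q_le {M : ℕ} (hM : 0 < M) {ξ : ℕ → ℝ} (hξ : ∀ k ∉ Finset.Icc 1 (M - 1), ξ k = 0)
    {ψ ψ' ψ'' : ℝ → ℝ} (hψ : IsH2Dirichlet ψ ψ' ψ'')
    (hload : load M ψ = interiorPart M fun j => massAvg ξ j / M) :
    ∑ i ∈ Finset.Icc 1 (M - 1), d2q M ξ i ^ 2 ≤ 11520 * M * ∫ x in Icc 0 1, ψ'' x ^ 2 := by
  have hlocal : ∀ i ∈ Finset.Icc 1 (M - 1), massAvg (interiorPart M (d2q M ξ)) i ^ 2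
      ≤ 256 * M * ∫ x in patch M i, ψ'' x ^ 2 := fun i hi => by
    rw [massAvg_interiorPart_d2q hξ hi, ← hload]
    exact sq_secondDiff_load_le hi hψ
  calc ∑ i ∈ Finset.Icc 1 (M - 1), d2q M ξ i ^ 2
      = ∑ i ∈ Finset.Icc 1 (M - 1), interiorPart M (d2q M ξ) i ^ 2 :=
        Finset.sum_congr rfl fun i hi => by rw [interiorPart, if_pos hi]
    _ ≤ 9 * ∑ i ∈ Finset.Icc 1 (M - 1), massAvg (interiorPart M (d2q M ξ)) i ^ 2 :=
        sum_sq_le_nine_mul_sum_sq_massAvg fun k hk => if_neg hk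
    _ ≤ 9 * (256 * M * ∑ i ∈ Finset.Icc 1 (M - 1), ∫ x in patch M i, ψ'' x ^ 2) := by
        gcongr 9 * ?_
        rw [Finset.mul_sum]
        exact Finset.sum_le_sum hlocal
    _ ≤ 9 * (256 * M * (5 * ∫ x in Icc 0 1, ψ'' x ^ 2)) := by
        gcongr
        exact sum_setIntegral_patch_le hM _ hψ.integrableOn_deriv2_sq fun _ => sq_nonneg _
    _ = 11520 * M * ∫ x in Icc 0 1, ψ'' x ^ 2 := by ring

/-- For `ψ ∈ H²(0,1) ∩ H₀¹(0,1)` with `L²` projection `Pψ = Σ ξⁱvⁱ` onto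
the piecewise linear finite element space (characterized by `(ψ - Pψ, vⁱ) = 0`),
`(Δx Σ (D²ξ)ᵢ²)^{1/2} ≤ C ‖ψ''‖_{L²}` with `C` independent of `Δx`.  Membership of `ψ`
in `H² ∩ H₀¹` is expressed by absolute continuity of `ψ` and `ψ'` (via the fundamental
theorem of calculus) together with `ψ'' ∈ L²` and the Dirichlet boundary values. -/
theorem stmt11 : ∃ C : ℝ, 0 < C ∧
    ∀ M : ℕ, 2 ≤ M → ∀ ξ : ℕ → ℝ, ξ 0 = 0 → (∀ i, M ≤ i → ξ i = 0) →
    ∀ ψ ψ' ψ'' : ℝ → ℝ,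
      ψ 0 = 0 → ψ 1 = 0 →
      ContinuousOn ψ (Set.Icc 0 1) → ContinuousOn ψ' (Set.Icc 0 1) →
      IntegrableOn ψ'' (Set.Icc 0 1) →
      IntegrableOn (fun x => (ψ'' x) ^ 2) (Set.Icc 0 1) →
      (∀ a ∈ Set.Icc (0 : ℝ) 1, ∀ b ∈ Set.Icc (0 : ℝ) 1,
        ψ b - ψ a = ∫ x in a..b, ψ' x) →
      (∀ a ∈ Set.Icc (0 : ℝ) 1, ∀ b ∈ Set.Icc (0 : ℝ) 1,
        ψ' b - ψ' a = ∫ x in a..b, ψ'' x) →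
      (∀ i ∈ Finset.Icc 1 (M - 1),
        (∫ x in (0 : ℝ)..1, ψ x * hatFn M i x) = ∫ x in (0 : ℝ)..1, plf M ξ x * hatFn M i x) →
      Real.sqrt ((1 / (M : ℝ)) * ∑ i ∈ Finset.Icc 1 (M - 1), (d2q M ξ i) ^ 2)
        ≤ C * Real.sqrt (∫ x in (0 : ℝ)..1, (ψ'' x) ^ 2) := by
  refine ⟨Real.sqrt 11520, by positivity, ?_⟩
  intro M hM ξ hξ0 hξM ψ ψ' ψ'' hψ0 hψ1 hψc hψ'c hψ'' hψ''sq hftc hftc' hproj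
  have hψ : IsH2Dirichlet ψ ψ' ψ'' := ⟨hψ0, hψ1, hψc, hψ'c, hψ'', hψ''sq, hftc, hftc'⟩
  have hξ : ∀ k ∉ Finset.Icc 1 (M - 1), ξ k = 0 := fun k hk => by
    rcases (by simp only [Finset.mem_Icc] at hk; omega : k = 0 ∨ M ≤ k) with rfl | h
    exacts [hξ0, hξM k h]
  have hsum := sum_sq_d2q_le (by omega) hξ hψ (load_eq_interiorPart_massAvg hξ hproj)
  have hM' : (0 : ℝ) < M := by exact_mod_cast (by omega : 0 < M)
  rw [← Real.sqrt_mul (by norm_num), integral_of_le zero_le_one, ← integral_Icc_eq_integral_Ioc]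
  refine Real.sqrt_le_sqrt ?_
  rw [one_div, inv_mul_le_iff₀ hM']
  linarith
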